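/- Under the saw map setup, assume 1/α_{k*} + 1/β_{k*} > 1. If x ∈ J* satisfies x ∉ Σ and T(x) ∈ Σ, then x is a local maximum point of T (i.e., there exists δ > 0 such that T(y) ≤ T(x) for all y ∈ J with |y − x| < δ) and there exists n ∈ ℕ such that Tⁿ(x) = e_{k*}. -/

import Mathlib

/-- `T` is affine (linear) on the segment `[a, b]`. -/
def AffOn (T : ℝ → ℝ) (a b : ℝ) : Prop :=
  ∃ m c : ℝ, ∀ x ∈ Set.Icc a b, T x = m * x + c

/-- The "saw map" setup: sequences `q, r, p`, the map `T`, fixed points `e k ∈ (q (k+1), r k)`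
and `ehat k ∈ (r k, q k)`, and the index `kstar`, subject to all standing assumptions. -/
structure SawMapSetup where
  q : ℕ → ℝ
  r : ℕ → ℝ
  p : ℕ → ℝ
  T : ℝ → ℝ
  e : ℕ → ℝ
  ehat : ℕ → ℝ
  kstar : ℕ
  hq_pos : ∀ k, 1 ≤ k → 0 < q k
  hr_pos : ∀ k, 0 < r k
  hq1r0 : q 1 < r 0
  hrq : ∀ k, 1 ≤ k → r k < q k
  hqr : ∀ k, 1 ≤ k → q (k + 1) < r k
  hq_lim : Filter.Tendsto q Filter.atTop (nhds 0)
  hr_lim : Filter.Tendsto r Filter.atTop (nhds 0)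
  hp_pos : ∀ k, 0 < p k
  hp_dec : ∀ k, p (k + 1) < p k
  hp0r0 : p 0 < r 0
  hpr : ∀ k, 1 ≤ k → r k < p k
  hT0 : T 0 = 0
  hTq : ∀ k, 1 ≤ k → T (q k) = 0
  hTr : ∀ k, T (r k) = p k
  haff0 : AffOn T (q 1) (r 0)
  haff1 : ∀ k, 1 ≤ k → AffOn T (q (k + 1)) (r k)
  haff2 : ∀ k, 1 ≤ k → AffOn T (r k) (q k)
  hTJ : Set.MapsTo T (Set.Icc 0 (r 0)) (Set.Icc 0 (r 0))
  halpha1 : ∀ k, 1 ≤ k → 1 < p k / (r k - q (k + 1))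
  he_mem : ∀ k, 1 ≤ k → e k ∈ Set.Ioo (q (k + 1)) (r k)
  he_fix : ∀ k, 1 ≤ k → T (e k) = e k
  he_uniq : ∀ k, 1 ≤ k → ∀ x ∈ Set.Ioo (q (k + 1)) (r k), T x = x → x = e k
  hehat_mem : ∀ k, 1 ≤ k → ehat k ∈ Set.Ioo (r k) (q k)
  hehat_fix : ∀ k, 1 ≤ k → T (ehat k) = ehat k
  hehat_uniq : ∀ k, 1 ≤ k → ∀ x ∈ Set.Ioo (r k) (q k), T x = x → x = ehat k
  halpha_mono : ∀ k, p k / (r k - q (k + 1)) < p (k + 1) / (r (k + 1) - q (k + 2))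
  hbeta_mono : ∀ k, 1 ≤ k → p k / (q k - r k) < p (k + 1) / (q (k + 1) - r (k + 1))
  hkstar : 1 ≤ kstar
  hp_e_big : ∀ k, kstar + 1 ≤ k → e (k - 1) < p k
  hp_e_small : 2 ≤ kstar → ∀ k, 2 ≤ k → k ≤ kstar → p k < e (k - 1)
  htech : ∀ k, 1 ≤ k → k < kstar → p k < q k + e k / (p (k - 1) / (r (k - 1) - q k))

namespace SawMapSetup

variable (S : SawMapSetup)

/-- Absolute value of the slope of `T` on `[q (k+1), r k]`. -/
noncomputable def alpha (k : ℕ) : ℝ := S.p k / (S.r k - S.q (k + 1))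

/-- Absolute value of the slope of `T` on `[r k, q k]`. -/
noncomputable def beta (k : ℕ) : ℝ := S.p k / (S.q k - S.r k)

/-- The invariant segment `J* = [0, p kstar]`. -/
def Jstar : Set ℝ := Set.Icc 0 (S.p S.kstar)

/-- The segment `J_k = [e k, p k]`. -/
def Jk (k : ℕ) : Set ℝ := Set.Icc (S.e k) (S.p k)

/-- The segment `G_k = [T (p k), p k]`. -/
def Gk (k : ℕ) : Set ℝ := Set.Icc (S.T (S.p k)) (S.p k)

/-- The set `Ω` of points of `J*` that are eventually mapped to `0`. -/
def Omega : Set ℝ := {x | x ∈ S.Jstar ∧ ∃ n, 1 ≤ n ∧ S.T^[n] x = 0}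

/-- The set `Σ`, the closure of `Ω`. -/
def Sig : Set ℝ := closure S.Omega

end SawMapSetup

/-!
The slope condition gives `T (p k*) > e k*`, so `(e k*, p k*]` is a trap that never reaches `0`
and `Σ ⊆ [0, e k*]`. Off the peaks `r j`, `T` is a local homeomorphism of `J*` mapping `Ω` into
itself, so `Σ` pulls back along it; hence `x = r m` with `m > k*`, a local maximum.

If no iterate of `r m` were `e k*`, the orbit of `p m = T (r m)` would stay in `Σ ∩ [0, e k*)`.
Either `Ω` accumulates at `p m` from below, and pulling back along the increasing branch puts
`r m` in `Σ`; or some `[a, p m]` misses `Ω`. Its images then miss `Ω`, in particular the edges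
`q j` of the teeth and a left neighbourhood of `e k*`, so each is an interval inside one tooth
below `e k*`, and their lengths grow geometrically: absurd.
-/

open Set Filter Topology

lemma AffOn.apply_eq {T : ℝ → ℝ} {a b : ℝ} (h : AffOn T a b) (hab : a < b) {w : ℝ}
    (hw : w ∈ Icc a b) : T w = T a + (T b - T a) / (b - a) * (w - a) := by
  obtain ⟨m, c, h⟩ := h
  rw [h w hw, h a (left_mem_Icc.2 hab.le), h b (right_mem_Icc.2 hab.le)]
  field_simp [(sub_pos.2 hab).ne']
  ring

lemma exists_tent_sub_ge {α β a c u v : ℝ} (hα : 0 < α) (hβ : 0 < β) (huv : u ≤ v) :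
    ∃ x ∈ Icc u v, ∃ y ∈ Icc u v, (α⁻¹ + β⁻¹)⁻¹ * (v - u) ≤
      min (α * (x - a)) (β * (c - x)) - min (α * (y - a)) (β * (c - y)) := by
  set b := (α * a + β * c) / (α + β)
  have hpeak : α * (b - a) = β * (c - b) := by
    simp only [b]; field_simp; ring
  have hleft : ∀ x ≤ b, min (α * (x - a)) (β * (c - x)) = α * (x - a) := fun x hx =>
    min_eq_left (by nlinarith)
  have hright : ∀ x, b ≤ x → min (α * (x - a)) (β * (c - x)) = β * (c - x) := fun x hx =>
    min_eq_right (by nlinarith)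
  set H := (α⁻¹ + β⁻¹)⁻¹
  have hHα : H ≤ α := inv_le_of_inv_le₀ hα (le_add_of_nonneg_right (by positivity))
  have hHβ : H ≤ β := inv_le_of_inv_le₀ hβ (le_add_of_nonneg_left (by positivity))
  have hu := left_mem_Icc.2 huv
  have hv := right_mem_Icc.2 huv
  rcases le_total v b with hvb | hbv
  · refine ⟨v, hv, u, hu, ?_⟩
    rw [hleft v hvb, hleft u (huv.trans hvb)]
    nlinarith
  rcases le_total b u with hbu | hub
  · refine ⟨u, hu, v, hv, ?_⟩
    rw [hright u hbu, hright v (hbu.trans huv)]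
    nlinarith
  have hb : b ∈ Icc u v := ⟨hub, hbv⟩
  -- `v - u = α⁻¹ (α (b - u)) + β⁻¹ (β (v - b))`, so `H (v - u)` is at most the larger rise
  have hsplit : ∀ M, α * (b - u) ≤ M → β * (v - b) ≤ M → H * (v - u) ≤ M := by
    intro M h₁ h₂
    have : v - u ≤ (α⁻¹ + β⁻¹) * M := by
      have e₁ : b - u ≤ α⁻¹ * M := by rw [inv_mul_eq_div, le_div_iff₀ hα]; linarith
      have e₂ : v - b ≤ β⁻¹ * M := by rw [inv_mul_eq_div, le_div_iff₀ hβ]; linarith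
      linarith
    calc H * (v - u) ≤ H * ((α⁻¹ + β⁻¹) * M) := by gcongr
      _ = M := by simp only [H]; field_simp
  rcases le_total (β * (v - b)) (α * (b - u)) with h | h
  · refine ⟨b, hb, u, hu, ?_⟩
    rw [hleft b le_rfl, hleft u hub]
    linarith [hsplit _ le_rfl h]
  · refine ⟨b, hb, v, hv, ?_⟩
    rw [hright b le_rfl, hright v hbv]
    linarith [hsplit _ h le_rfl]

lemma ContinuousOn.exists_image_Icc_eq_and_le_sub {f : ℝ → ℝ} {u v c : ℝ} (huv : u ≤ v)
    (hf : ContinuousOn f (Icc u v)) {x y : ℝ} (hx : x ∈ Icc u v) (hy : y ∈ Icc u v)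
    (hc : c ≤ f x - f y) : ∃ U V, f '' Icc u v = Icc U V ∧ c ≤ V - U := by
  have hcpt := isCompact_Icc.image_of_continuousOn hf
  refine ⟨_, _, hf.image_Icc huv, ?_⟩
  have := le_csSup hcpt.bddAbove (mem_image_of_mem f hx)
  have := csInf_le hcpt.bddBelow (mem_image_of_mem f hy)
  linarith

lemma exists_Icc_disjoint_of_notMem_closure {s : Set ℝ} {p : ℝ} (hp : 0 < p)
    (h : p ∉ closure (s ∩ Iic p)) : ∃ a, 0 < a ∧ a < p ∧ Disjoint (Icc a p) s := by
  obtain ⟨ε, hε, hfar⟩ : ∃ ε > 0, ∀ b ∈ s ∩ Iic p, ε ≤ dist p b := by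
    simpa [Metric.mem_closure_iff] using h
  refine ⟨max (p - ε / 2) (p / 2), by positivity, max_lt (by linarith) (by linarith), ?_⟩
  refine Set.disjoint_left.2 fun ω hω hωs => ?_
  have := hfar ω ⟨hωs, hω.2⟩
  rw [Real.dist_eq, abs_of_nonneg (by linarith [hω.2])] at this
  linarith [le_max_left (p - ε / 2) (p / 2), hω.1]

namespace SawMapSetup

variable (S : SawMapSetup)

lemma q_succ_lt_q {k : ℕ} (hk : 1 ≤ k) : S.q (k + 1) < S.q k :=
  (S.hqr k hk).trans (S.hrq k hk)

lemma q_le_q {k j : ℕ} (hk : 1 ≤ k) (hkj : k ≤ j) : S.q j ≤ S.q k :=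
  Nat.rel_of_forall_rel_succ_of_le_of_le (· ≥ ·) (fun _ hn => (S.q_succ_lt_q hn).le) hk hkj

lemma p_antitone : Antitone S.p :=
  antitone_nat_of_succ_le fun k => (S.hp_dec k).le

lemma alpha_monotone : Monotone S.alpha :=
  monotone_nat_of_le_succ fun k => (S.halpha_mono k).le

lemma beta_le_beta {i j : ℕ} (hi : 1 ≤ i) (hij : i ≤ j) : S.beta i ≤ S.beta j :=
  Nat.rel_of_forall_rel_succ_of_le_of_le (· ≤ ·) (fun n hn => (S.hbeta_mono n hn).le) hi hij

lemma exists_mem_tooth {k : ℕ} {z : ℝ} (hz : 0 < z) (hzk : z ≤ S.q k) :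
    ∃ j, k ≤ j ∧ z ∈ Ioc (S.q (j + 1)) (S.q j) := by
  have hex : ∃ n, S.q (n + (k + 1)) < z :=
    ((S.hq_lim.comp (tendsto_add_atTop_nat (k + 1))).eventually_lt_const hz).exists
  classical
  refine ⟨Nat.find hex + k, by omega, by simpa [add_assoc] using Nat.find_spec hex, ?_⟩
  rcases Nat.eq_zero_or_pos (Nat.find hex) with h | h
  · simpa [h] using hzk
  · have := not_lt.1 (Nat.find_min hex (Nat.sub_lt h one_pos))
    rwa [show Nat.find hex - 1 + (k + 1) = Nat.find hex + k by omega] at this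

lemma alpha_pos {k : ℕ} (hk : 1 ≤ k) : 0 < S.alpha k :=
  div_pos (S.hp_pos k) (sub_pos.2 (S.hqr k hk))

lemma beta_pos {k : ℕ} (hk : 1 ≤ k) : 0 < S.beta k :=
  div_pos (S.hp_pos k) (sub_pos.2 (S.hrq k hk))

lemma alpha_mul_sub {k : ℕ} (hk : 1 ≤ k) : S.alpha k * (S.r k - S.q (k + 1)) = S.p k :=
  div_mul_cancel₀ _ (sub_pos.2 (S.hqr k hk)).ne'

lemma beta_mul_sub {k : ℕ} (hk : 1 ≤ k) : S.beta k * (S.q k - S.r k) = S.p k :=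
  div_mul_cancel₀ _ (sub_pos.2 (S.hrq k hk)).ne'

lemma inv_alpha_add_inv_beta (k : ℕ) :
    (S.alpha k)⁻¹ + (S.beta k)⁻¹ = (S.q k - S.q (k + 1)) / S.p k := by
  rw [alpha, beta, inv_div, inv_div, ← add_div]
  ring_nf

lemma T_left {k : ℕ} (hk : 1 ≤ k) {w : ℝ} (hw : w ∈ Icc (S.q (k + 1)) (S.r k)) :
    S.T w = S.alpha k * (w - S.q (k + 1)) := by
  rw [(S.haff1 k hk).apply_eq (S.hqr k hk) hw, S.hTq _ (by omega), S.hTr, alpha]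
  ring

lemma T_right {k : ℕ} (hk : 1 ≤ k) {w : ℝ} (hw : w ∈ Icc (S.r k) (S.q k)) :
    S.T w = S.beta k * (S.q k - w) := by
  rw [(S.haff2 k hk).apply_eq (S.hrq k hk) hw, S.hTq _ hk, S.hTr, beta]
  field_simp [(sub_pos.2 (S.hrq k hk)).ne']
  ring

lemma T_eq_min {k : ℕ} (hk : 1 ≤ k) {w : ℝ} (hw : w ∈ Icc (S.q (k + 1)) (S.q k)) :
    S.T w = min (S.alpha k * (w - S.q (k + 1))) (S.beta k * (S.q k - w)) := by
  have hα := S.alpha_mul_sub hk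
  have hβ := S.beta_mul_sub hk
  rcases le_total w (S.r k) with h | h
  · rw [S.T_left hk ⟨hw.1, h⟩, min_eq_left]
    nlinarith [S.alpha_pos hk, S.beta_pos hk]
  · rw [S.T_right hk ⟨h, hw.2⟩, min_eq_right]
    nlinarith [S.alpha_pos hk, S.beta_pos hk]

lemma T_le_p {k : ℕ} (hk : 1 ≤ k) {w : ℝ} (hw : w ∈ Icc (S.q (k + 1)) (S.q k)) :
    S.T w ≤ S.p k := by
  rw [S.T_eq_min hk hw]
  rcases le_total w (S.r k) with h | h
  · nlinarith [min_le_left (S.alpha k * (w - S.q (k + 1))) (S.beta k * (S.q k - w)),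
      S.alpha_mul_sub hk, S.alpha_pos hk]
  · nlinarith [min_le_right (S.alpha k * (w - S.q (k + 1))) (S.beta k * (S.q k - w)),
      S.beta_mul_sub hk, S.beta_pos hk]

lemma continuousAt_T {k : ℕ} (hk : 1 ≤ k) {w : ℝ} (hw : w ∈ Ioo (S.q (k + 1)) (S.q k)) :
    ContinuousAt S.T w := by
  refine ContinuousAt.congr
    (f := fun z => min (S.alpha k * (z - S.q (k + 1))) (S.beta k * (S.q k - z))) (by fun_prop) ?_
  filter_upwards [Ioo_mem_nhds hw.1 hw.2] with z hz
  exact (S.T_eq_min hk (Ioo_subset_Icc_self hz)).symm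

variable {S}

lemma r_le_p_kstar {j : ℕ} (hj : S.kstar ≤ j) : S.r j ≤ S.p S.kstar := by
  have hk := S.hkstar
  rcases hj.eq_or_lt with rfl | hj
  · exact (S.hpr _ hk).le
  · calc S.r j ≤ S.q j := (S.hrq j (by omega)).le
      _ ≤ S.q (S.kstar + 1) := S.q_le_q (by omega) hj
      _ ≤ S.r S.kstar := (S.hqr _ hk).le
      _ ≤ S.p S.kstar := (S.hpr _ hk).le

lemma e_lt_p_kstar : S.e S.kstar < S.p S.kstar :=
  (S.he_mem _ S.hkstar).2.trans (S.hpr _ S.hkstar)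

lemma q_lt_p {j : ℕ} (hj : S.kstar + 1 ≤ j) : S.q j < S.p j := by
  have h := (S.he_mem (j - 1) (by have := S.hkstar; omega)).1
  rw [Nat.sub_add_cancel (by omega)] at h
  exact h.trans (S.hp_e_big j hj)

lemma T_sub_e {k : ℕ} (hk : 1 ≤ k) {w : ℝ} (hw : w ∈ Icc (S.q (k + 1)) (S.r k)) :
    S.T w - S.e k = S.alpha k * (w - S.e k) := by
  have he := S.he_mem k hk
  have hfix := S.he_fix k hk
  rw [S.T_left hk ⟨he.1.le, he.2.le⟩] at hfix
  rw [S.T_left hk hw]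
  linear_combination hfix

lemma Jstar_subset_Icc : S.Jstar ⊆ Icc 0 (S.r 0) :=
  Icc_subset_Icc_right ((S.p_antitone (Nat.zero_le _)).trans S.hp0r0.le)

lemma zero_mem_Omega : (0 : ℝ) ∈ S.Omega :=
  ⟨⟨le_rfl, (S.hp_pos _).le⟩, 1, le_rfl, by simp [S.hT0]⟩

lemma q_mem_Omega {j : ℕ} (hj : 1 ≤ j) (hq : S.q j ≤ S.p S.kstar) : S.q j ∈ S.Omega :=
  ⟨⟨(S.hq_pos j hj).le, hq⟩, 1, le_rfl, by simp [S.hTq j hj]⟩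

lemma mem_Omega_of_T_mem {z : ℝ} (hz : z ∈ S.Jstar) (hTz : S.T z ∈ S.Omega) : z ∈ S.Omega := by
  obtain ⟨-, n, -, hn⟩ := hTz
  exact ⟨hz, n + 1, by omega, by rwa [Function.iterate_succ_apply]⟩

lemma disjoint_image_Omega {s : Set ℝ} (hs : s ⊆ S.Jstar) (h : Disjoint s S.Omega) :
    Disjoint (S.T '' s) S.Omega := by
  refine disjoint_left.2 ?_
  rintro _ ⟨z, hz, rfl⟩ hTz
  exact disjoint_left.1 h hz (mem_Omega_of_T_mem (hs hz) hTz)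

variable (S) in
noncomputable def leftBranchInv (j : ℕ) (w : ℝ) : ℝ := S.q (j + 1) + w / S.alpha j

lemma continuous_leftBranchInv (j : ℕ) : Continuous (S.leftBranchInv j) := by
  unfold leftBranchInv
  fun_prop

lemma leftBranchInv_mem {j : ℕ} (hj : 1 ≤ j) {w : ℝ} (hw : w ∈ Icc 0 (S.p j)) :
    S.leftBranchInv j w ∈ Icc (S.q (j + 1)) (S.r j) := by
  have hα := S.alpha_pos hj
  have : w / S.alpha j ≤ S.r j - S.q (j + 1) := by
    rw [div_le_iff₀ hα, mul_comm, S.alpha_mul_sub hj]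
    exact hw.2
  exact ⟨le_add_of_nonneg_right (div_nonneg hw.1 hα.le), by unfold leftBranchInv; linarith⟩

lemma T_leftBranchInv {j : ℕ} (hj : 1 ≤ j) {w : ℝ} (hw : w ∈ Icc 0 (S.p j)) :
    S.T (S.leftBranchInv j w) = w := by
  rw [S.T_left hj (S.leftBranchInv_mem hj hw), leftBranchInv]
  field_simp [(S.alpha_pos hj).ne']
  ring

lemma leftBranchInv_T {j : ℕ} (hj : 1 ≤ j) {z : ℝ} (hz : z ∈ Icc (S.q (j + 1)) (S.r j)) :
    S.leftBranchInv j (S.T z) = z := by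
  rw [S.T_left hj hz, leftBranchInv]
  field_simp [(S.alpha_pos hj).ne']
  ring

lemma leftBranchInv_sub_e {j : ℕ} (hj : 1 ≤ j) (w : ℝ) :
    S.leftBranchInv j w - S.e j = (S.alpha j)⁻¹ * (w - S.e j) := by
  have he := S.he_mem j hj
  have hfix := S.he_fix j hj
  rw [S.T_left hj ⟨he.1.le, he.2.le⟩] at hfix
  rw [leftBranchInv]
  field_simp [(S.alpha_pos hj).ne']
  linear_combination -hfix

lemma mapsTo_leftBranchInv {j : ℕ} (hj : S.kstar ≤ j) :
    MapsTo (S.leftBranchInv j) (S.Omega ∩ Iic (S.p j)) S.Omega := by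
  rintro ω ⟨hω, hωp⟩
  have hj1 : 1 ≤ j := S.hkstar.trans hj
  have hmem := S.leftBranchInv_mem hj1 ⟨hω.1.1, hωp⟩
  refine mem_Omega_of_T_mem
    ⟨(S.hq_pos _ (by omega)).le.trans hmem.1, hmem.2.trans (r_le_p_kstar hj)⟩ ?_
  rwa [S.T_leftBranchInv hj1 ⟨hω.1.1, hωp⟩]

lemma leftBranchInv_mem_Sig {j : ℕ} (hj : S.kstar ≤ j) {w : ℝ}
    (hw : w ∈ closure (S.Omega ∩ Iic (S.p j))) : S.leftBranchInv j w ∈ S.Sig :=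
  map_mem_closure (S.continuous_leftBranchInv j) hw (mapsTo_leftBranchInv hj)

lemma mem_Sig_of_T_mem_left {j : ℕ} (hj : S.kstar ≤ j) {z : ℝ}
    (hz : z ∈ Ico (S.q (j + 1)) (S.r j)) (hTz : S.T z ∈ S.Sig) : z ∈ S.Sig := by
  have hj1 : 1 ≤ j := S.hkstar.trans hj
  have hlt : S.T z < S.p j := by
    rw [S.T_left hj1 (Ico_subset_Icc_self hz), ← S.alpha_mul_sub hj1]
    exact mul_lt_mul_of_pos_left (by linarith [hz.2]) (S.alpha_pos hj1)
  rw [← S.leftBranchInv_T hj1 (Ico_subset_Icc_self hz)]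
  refine leftBranchInv_mem_Sig hj (closure_mono ?_ (isOpen_Iio.inter_closure ⟨hlt, hTz⟩))
  exact fun w hw => ⟨hw.2, Iio_subset_Iic_self hw.1⟩

lemma mem_Sig_of_T_mem_right {j : ℕ} (hj : 1 ≤ j) {z : ℝ} (hz : z ∈ Ioo (S.r j) (S.q j))
    (hzp : z < S.p S.kstar) (hTz : S.T z ∈ S.Sig) : z ∈ S.Sig := by
  have hβ := S.beta_pos hj
  have hβq := S.beta_mul_sub hj
  set g : ℝ → ℝ := fun w => S.q j - w / S.beta j
  have hg : Continuous g := by fun_prop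
  have hgT : g (S.T z) = z := by
    simp only [g]
    rw [S.T_right hj (Ioo_subset_Icc_self hz)]
    field_simp
    ring
  have hmaps : MapsTo g ((Iio (S.p j) ∩ g ⁻¹' Iio (S.p S.kstar)) ∩ S.Omega) S.Omega := by
    rintro ω ⟨⟨hωp, hωk⟩, hω⟩
    have hmem : g ω ∈ Icc (S.r j) (S.q j) := by
      simp only [g]
      constructor
      · rw [le_sub_comm, div_le_iff₀ hβ, mul_comm, hβq]
        exact hωp.le
      · linarith [div_nonneg hω.1.1 hβ.le]
    refine mem_Omega_of_T_mem ⟨(S.hr_pos j).le.trans hmem.1, le_of_lt hωk⟩ ?_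
    rw [S.T_right hj hmem]
    convert hω using 1
    simp only [g]
    field_simp
    ring
  have hU : IsOpen (Iio (S.p j) ∩ g ⁻¹' Iio (S.p S.kstar)) :=
    isOpen_Iio.inter (isOpen_Iio.preimage hg)
  have hlt : S.T z < S.p j := by
    rw [S.T_right hj (Ioo_subset_Icc_self hz), ← hβq]
    exact mul_lt_mul_of_pos_left (by linarith [hz.1]) hβ
  rw [← hgT]
  exact map_mem_closure hg (hU.inter_closure ⟨⟨hlt, by simpa [hgT] using hzp⟩, hTz⟩) hmaps

/-- The backward orbit of `q (k* + 1)` under the left branch climbs to `e k*` inside `Ω`. -/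
lemma e_kstar_mem_closure : S.e S.kstar ∈ closure (S.Omega ∩ Iio (S.e S.kstar)) := by
  have hk := S.hkstar
  have he := S.he_mem _ hk
  set z : ℕ → ℝ := fun i => (S.leftBranchInv S.kstar)^[i] (S.q (S.kstar + 1))
  have hz : ∀ i, z i ∈ S.Omega ∩ Iio (S.e S.kstar) := by
    intro i
    induction i with
    | zero => exact ⟨S.q_mem_Omega (by omega) (by linarith [he.1, e_lt_p_kstar (S := S)]), he.1⟩
    | succ i ih =>
      rw [show z (i + 1) = S.leftBranchInv S.kstar (z i) from
        Function.iterate_succ_apply' _ _ _]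
      refine ⟨mapsTo_leftBranchInv le_rfl ⟨ih.1, ih.2.le.trans e_lt_p_kstar.le⟩, mem_Iio.2 ?_⟩
      have hzi : z i < S.e S.kstar := ih.2
      have := S.leftBranchInv_sub_e hk (z i)
      have := inv_pos.2 (S.alpha_pos hk)
      nlinarith
  have hform : ∀ i, z i = S.e S.kstar +
      (S.alpha S.kstar)⁻¹ ^ i * (S.q (S.kstar + 1) - S.e S.kstar) := by
    intro i
    induction i with
    | zero => simp [z]
    | succ i ih =>
      have h := S.leftBranchInv_sub_e hk (z i)
      rw [show z (i + 1) = S.leftBranchInv S.kstar (z i) from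
        Function.iterate_succ_apply' _ _ _]
      rw [ih] at h ⊢
      linear_combination h
  have hlim : Tendsto z atTop (𝓝 (S.e S.kstar)) := by
    have h0 := tendsto_pow_atTop_nhds_zero_of_lt_one (inv_nonneg.2 (S.alpha_pos hk).le)
      (inv_lt_one_of_one_lt₀ (S.halpha1 _ hk))
    rw [funext hform]
    simpa using (h0.mul_const (S.q (S.kstar + 1) - S.e S.kstar)).const_add (S.e S.kstar)
  exact mem_closure_of_tendsto hlim (Eventually.of_forall hz)

lemma lt_e_of_disjoint {u v : ℝ} (hu : u < S.e S.kstar) (h : Disjoint (Icc u v) S.Omega) :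
    v < S.e S.kstar := by
  by_contra! hv
  obtain ⟨ω, hωu, hω, hωe⟩ := mem_closure_iff.1 e_kstar_mem_closure (Ioi u) isOpen_Ioi hu
  exact disjoint_left.1 h ⟨le_of_lt hωu, hωe.le.trans hv⟩ hω

lemma isLocalMax_T_r {m : ℕ} (hm : 1 ≤ m) : IsLocalMax S.T (S.r m) := by
  filter_upwards [Ioo_mem_nhds (S.hqr m hm) (S.hrq m hm)] with y hy
  rw [S.hTr]
  exact S.T_le_p hm (Ioo_subset_Icc_self hy)

variable (S) in
/-- On tooth `k*` an `Ω`-free interval below `e k*` lies on the left branch (slope `α k*`); on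
deeper teeth the tent factor `(α⁻¹ + β⁻¹)⁻¹` is at least its value at `k* + 1`, since `α` and
`β` increase. -/
noncomputable def expansion : ℝ :=
  min (S.alpha S.kstar) ((S.alpha (S.kstar + 1))⁻¹ + (S.beta (S.kstar + 1))⁻¹)⁻¹

lemma one_lt_expansion : 1 < S.expansion := by
  have hk := S.hkstar
  refine lt_min (S.halpha1 _ hk) ?_
  have hq := S.q_succ_lt_q (by omega : 1 ≤ S.kstar + 1)
  rw [inv_alpha_add_inv_beta, inv_div, one_lt_div (by linarith)]
  linarith [q_lt_p (S := S) le_rfl, S.hq_pos (S.kstar + 1 + 1) (by omega)]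

lemma expansion_le_tent {j : ℕ} (hj : S.kstar + 1 ≤ j) :
    S.expansion ≤ ((S.alpha j)⁻¹ + (S.beta j)⁻¹)⁻¹ := by
  have hk := S.hkstar
  have hα := S.alpha_pos (by omega : 1 ≤ S.kstar + 1)
  have hβ := S.beta_pos (by omega : 1 ≤ S.kstar + 1)
  have hsum : 0 < (S.alpha j)⁻¹ + (S.beta j)⁻¹ := by
    have := S.alpha_pos (by omega : 1 ≤ j)
    have := S.beta_pos (by omega : 1 ≤ j)
    positivity
  refine (min_le_right _ _).trans (inv_anti₀ hsum (add_le_add ?_ ?_))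
  · exact inv_anti₀ hα (S.alpha_monotone hj)
  · exact inv_anti₀ hβ (S.beta_le_beta (by omega) hj)

lemma exists_image_Icc_expanding {u v : ℝ} (huv : u < v) (hu : 0 < u) (hv : v < S.e S.kstar)
    (h : Disjoint (Icc u v) S.Omega) :
    ∃ U V, S.T '' Icc u v = Icc U V ∧ S.expansion * (v - u) ≤ V - U := by
  have hk := S.hkstar
  have he := S.he_mem _ hk
  obtain ⟨j, hj, hqu, huq⟩ :=
    S.exists_mem_tooth hu (by linarith [he.2, S.hrq _ hk] : u ≤ S.q S.kstar)
  have hj1 : 1 ≤ j := hk.trans hj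
  -- `q j ∈ Ω`, so `[u, v]` stays inside the tooth
  have hvq : v < S.q j := by
    by_contra! hqv
    exact disjoint_left.1 h ⟨huq, hqv⟩ (S.q_mem_Omega hj1 (by linarith [e_lt_p_kstar (S := S)]))
  have hsub : Icc u v ⊆ Ioo (S.q (j + 1)) (S.q j) := Icc_subset_Ioo hqu hvq
  have hcont : ContinuousOn S.T (Icc u v) := fun w hw =>
    (S.continuousAt_T hj1 (hsub hw)).continuousWithinAt
  rcases hj.eq_or_lt with rfl | hj'
  · refine hcont.exists_image_Icc_eq_and_le_sub huv.le (right_mem_Icc.2 huv.le)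
      (left_mem_Icc.2 huv.le) ?_
    rw [S.T_left hk (w := v) ⟨by linarith, by linarith [he.2]⟩,
      S.T_left hk (w := u) ⟨hqu.le, by linarith [he.2]⟩]
    have : S.expansion ≤ S.alpha S.kstar := min_le_left _ _
    nlinarith
  · obtain ⟨x, hx, y, hy, hxy⟩ := exists_tent_sub_ge (a := S.q (j + 1)) (c := S.q j)
      (S.alpha_pos hj1) (S.beta_pos hj1) huv.le
    refine hcont.exists_image_Icc_eq_and_le_sub huv.le hx hy ?_
    rw [S.T_eq_min hj1 (Ioo_subset_Icc_self (hsub hx)),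
      S.T_eq_min hj1 (Ioo_subset_Icc_self (hsub hy))]
    exact le_trans (mul_le_mul_of_nonneg_right (expansion_le_tent hj') (by linarith)) hxy

lemma not_disjoint_Omega_of_orbit_lt {a b y : ℝ} (hab : a < b) (ha : 0 < a)
    (hy : y ∈ Icc a b) (horb : ∀ n, S.T^[n] y < S.e S.kstar) :
    ¬ Disjoint (Icc a b) S.Omega := by
  intro hfree
  have hγ := one_lt_expansion (S := S)
  have grow : ∀ n, ∃ u v, 0 < u ∧ Disjoint (Icc u v) S.Omega ∧ S.T^[n] y ∈ Icc u v ∧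
      (b - a) * S.expansion ^ n ≤ v - u := by
    intro n
    induction n with
    | zero => exact ⟨a, b, ha, hfree, hy, by simp⟩
    | succ n ih =>
      obtain ⟨u, v, hu, hfree, hyn, hlen⟩ := ih
      have hv : v < S.e S.kstar := lt_e_of_disjoint (hyn.1.trans_lt (horb n)) hfree
      have huv : u < v := by nlinarith [pow_pos (one_pos.trans hγ) n]
      obtain ⟨U, V, himg, hUV⟩ := exists_image_Icc_expanding huv hu hv hfree
      have hsub : Icc u v ⊆ S.Jstar := Icc_subset_Icc hu.le (hv.le.trans e_lt_p_kstar.le)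
      have hfree' : Disjoint (Icc U V) S.Omega := himg ▸ disjoint_image_Omega hsub hfree
      have hU : U ∈ Icc U V := left_mem_Icc.2 (by nlinarith)
      refine ⟨U, V, ?_, hfree', ?_, ?_⟩
      · obtain ⟨w, hw, hwU⟩ := himg ▸ hU
        refine lt_of_le_of_ne (hwU ▸ (S.hTJ (Jstar_subset_Icc (hsub hw))).1) fun h0 => ?_
        exact disjoint_left.1 hfree' hU (h0 ▸ zero_mem_Omega)
      · rw [Function.iterate_succ_apply', ← himg]
        exact mem_image_of_mem _ hyn
      · calc (b - a) * S.expansion ^ (n + 1) = (b - a) * S.expansion ^ n * S.expansion := by ring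
          _ ≤ (v - u) * S.expansion := by gcongr
          _ ≤ V - U := by linarith
  obtain ⟨n, hn⟩ := pow_unbounded_of_one_lt (S.e S.kstar / (b - a)) hγ
  obtain ⟨u, v, hu, hfree, hyn, hlen⟩ := grow n
  have hv := lt_e_of_disjoint (hyn.1.trans_lt (horb n)) hfree
  rw [div_lt_iff₀ (sub_pos.2 hab)] at hn
  linarith

section SlopeCondition

variable (hsl : 1 < 1 / S.alpha S.kstar + 1 / S.beta S.kstar)
include hsl

lemma p_kstar_lt_q : S.p S.kstar < S.q S.kstar := by
  rw [one_div, one_div, inv_alpha_add_inv_beta, one_lt_div (S.hp_pos _)] at hsl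
  linarith [S.hq_pos (S.kstar + 1) (by omega)]

/-- The slope condition enters through `T p - e = β (p - e) (1/α + 1/β - 1)` at index `k*`. -/
lemma e_lt_T_p_kstar : S.e S.kstar < S.T (S.p S.kstar) := by
  have hk := S.hkstar
  have hα := S.alpha_pos hk
  have hβ := S.beta_pos hk
  have hpe := sub_pos.2 (e_lt_p_kstar (S := S))
  have hr : S.r S.kstar - S.e S.kstar = (S.p S.kstar - S.e S.kstar) / S.alpha S.kstar := by
    rw [eq_div_iff hα.ne', mul_comm, ← S.T_sub_e hk ⟨(S.hqr _ hk).le, le_rfl⟩, S.hTr]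
  rw [S.T_right hk ⟨(S.hpr _ hk).le, (p_kstar_lt_q hsl).le⟩]
  have key : S.beta S.kstar * (S.q S.kstar - S.p S.kstar) - S.e S.kstar =
      S.beta S.kstar * (S.p S.kstar - S.e S.kstar) *
        (1 / S.alpha S.kstar + 1 / S.beta S.kstar - 1) := by
    have hq := S.beta_mul_sub hk
    field_simp at hr ⊢
    linear_combination S.alpha S.kstar * hq + S.beta S.kstar * hr
  have : 0 < S.beta S.kstar * (S.p S.kstar - S.e S.kstar) *
      (1 / S.alpha S.kstar + 1 / S.beta S.kstar - 1) := by
    have := sub_pos.2 hsl; positivity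
  linarith

lemma mapsTo_T_trap :
    MapsTo S.T (Ioc (S.e S.kstar) (S.p S.kstar)) (Ioc (S.e S.kstar) (S.p S.kstar)) := by
  intro z hz
  have hk := S.hkstar
  have he := S.he_mem _ hk
  have hzq : z ∈ Icc (S.q (S.kstar + 1)) (S.q S.kstar) :=
    ⟨(he.1.trans hz.1).le, hz.2.trans (p_kstar_lt_q hsl).le⟩
  refine ⟨?_, S.T_le_p hk hzq⟩
  rcases le_total z (S.r S.kstar) with h | h
  · have := S.T_sub_e hk ⟨hzq.1, h⟩
    nlinarith [S.alpha_pos hk, hz.1]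
  · calc S.e S.kstar < S.T (S.p S.kstar) := e_lt_T_p_kstar hsl
      _ ≤ S.T z := by
        rw [S.T_right hk ⟨h, hzq.2⟩, S.T_right hk ⟨(S.hpr _ hk).le, (p_kstar_lt_q hsl).le⟩]
        exact mul_le_mul_of_nonneg_left (by linarith [hz.2]) (S.beta_pos hk).le

lemma Omega_subset_Icc : S.Omega ⊆ Icc 0 (S.e S.kstar) := by
  rintro ω ⟨hω, n, -, hn⟩
  refine ⟨hω.1, not_lt.1 fun he => ?_⟩
  have := ((mapsTo_T_trap hsl).iterate n ⟨he, hω.2⟩).1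
  rw [hn] at this
  linarith [(S.he_mem _ S.hkstar).1, S.hq_pos (S.kstar + 1) (by omega)]

lemma Sig_subset_Icc : S.Sig ⊆ Icc 0 (S.e S.kstar) :=
  closure_minimal (Omega_subset_Icc hsl) isClosed_Icc

lemma mapsTo_T_Jstar : MapsTo S.T S.Jstar S.Jstar := by
  intro z hz
  refine ⟨(S.hTJ (Jstar_subset_Icc hz)).1, ?_⟩
  rcases hz.1.eq_or_lt with rfl | hz0
  · rw [S.hT0]
    exact (S.hp_pos _).le
  obtain ⟨j, hj, hzj⟩ := S.exists_mem_tooth hz0 (hz.2.trans (p_kstar_lt_q hsl).le)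
  exact (S.T_le_p (S.hkstar.trans hj) (Ioc_subset_Icc_self hzj)).trans (S.p_antitone hj)

lemma mapsTo_T_Omega : MapsTo S.T S.Omega S.Omega := by
  rintro ω ⟨hω, _ | m, hn, hn0⟩
  · omega
  rw [Function.iterate_succ_apply] at hn0
  rcases m.eq_zero_or_pos with rfl | hm
  · rw [Function.iterate_zero_apply] at hn0
    exact hn0 ▸ zero_mem_Omega
  · exact ⟨mapsTo_T_Jstar hsl hω, m, hm, hn0⟩

lemma mapsTo_T_Sig : MapsTo S.T S.Sig S.Sig := by
  intro σ hσ
  have hk := S.hkstar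
  have h0 : (0 : ℝ) ∈ S.Sig := subset_closure zero_mem_Omega
  have hσe := Sig_subset_Icc hsl hσ
  rcases hσe.1.eq_or_lt with rfl | hσ0
  · rwa [S.hT0]
  obtain ⟨j, hj, hσj⟩ := S.exists_mem_tooth hσ0
    (hσe.2.trans ((S.he_mem _ hk).2.trans (S.hrq _ hk)).le)
  have hj1 : 1 ≤ j := hk.trans hj
  rcases hσj.2.eq_or_lt with rfl | hσq
  · rwa [S.hTq j hj1]
  exact closure_mono (mapsTo_T_Omega hsl).image_subset
    ((S.continuousAt_T hj1 ⟨hσj.1, hσq⟩).continuousWithinAt.mem_closure_image hσ)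

/-- Off the peaks `T` is locally invertible, while `r k*` and `p k*` are mapped above `e k*`. -/
lemma eq_r_of_T_mem_Sig {x : ℝ} (hx : x ∈ S.Jstar) (hxS : x ∉ S.Sig) (hTx : S.T x ∈ S.Sig) :
    ∃ m, S.kstar + 1 ≤ m ∧ x = S.r m := by
  have hk := S.hkstar
  have hTxe := (Sig_subset_Icc hsl hTx).2
  have hx0 : 0 < x :=
    hx.1.lt_of_ne (by rintro rfl; exact hxS (subset_closure zero_mem_Omega))
  obtain ⟨j, hj, hxj⟩ := S.exists_mem_tooth hx0 (hx.2.trans (p_kstar_lt_q hsl).le)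
  have hj1 : 1 ≤ j := hk.trans hj
  have hxq : x < S.q j :=
    hxj.2.lt_of_ne (by rintro rfl; exact hxS (subset_closure (S.q_mem_Omega hj1 hx.2)))
  rcases lt_trichotomy x (S.r j) with hxr | rfl | hxr
  · exact absurd (mem_Sig_of_T_mem_left hj ⟨hxj.1.le, hxr⟩ hTx) hxS
  · refine ⟨j, hj.lt_of_ne ?_, rfl⟩
    rintro rfl
    rw [S.hTr] at hTxe
    exact hTxe.not_gt e_lt_p_kstar
  · rcases hx.2.lt_or_eq with hxp | rfl
    · exact absurd (mem_Sig_of_T_mem_right hj1 ⟨hxr, hxq⟩ hxp hTx) hxS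
    · exact (hTxe.not_gt (e_lt_T_p_kstar hsl)).elim

end SlopeCondition

end SawMapSetup

open SawMapSetup

/-- Under the saw map setup, if `1/α kstar + 1/β kstar > 1` and `x ∈ J*` satisfies `x ∉ Σ`
but `T x ∈ Σ`, then `x` is a local maximum point of `T` and some iterate of `x` equals
`e kstar`. -/
theorem preimage_of_Sig (S : SawMapSetup)
    (hslope : 1 < 1 / S.alpha S.kstar + 1 / S.beta S.kstar)
    (x : ℝ) (hx : x ∈ S.Jstar) (hxS : x ∉ S.Sig) (hTx : S.T x ∈ S.Sig) :
    (∃ δ > 0, ∀ y ∈ Set.Icc 0 (S.r 0), |y - x| < δ → S.T y ≤ S.T x) ∧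
    ∃ n : ℕ, S.T^[n] x = S.e S.kstar := by
  obtain ⟨m, hm, rfl⟩ := eq_r_of_T_mem_Sig hslope hx hxS hTx
  have hm1 : 1 ≤ m := by omega
  constructor
  · obtain ⟨δ, hδ, hmax⟩ := Metric.eventually_nhds_iff.1 (S.isLocalMax_T_r hm1)
    exact ⟨δ, hδ, fun y _ hy => hmax (by rwa [Real.dist_eq])⟩
  by_contra! hne
  rw [S.hTr] at hTx
  have horb : ∀ n, S.T^[n] (S.p m) < S.e S.kstar := fun n =>
    (Sig_subset_Icc hslope ((mapsTo_T_Sig hslope).iterate n hTx)).2.lt_of_ne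
      (by rw [← S.hTr, ← Function.iterate_succ_apply]; exact hne (n + 1))
  by_cases hacc : S.p m ∈ closure (S.Omega ∩ Iic (S.p m))
  · have := leftBranchInv_mem_Sig (by omega) hacc
    rw [← S.hTr, S.leftBranchInv_T hm1 ⟨(S.hqr m hm1).le, le_rfl⟩] at this
    exact hxS this
  · obtain ⟨a, ha, hap, hfree⟩ := exists_Icc_disjoint_of_notMem_closure (S.hp_pos m) hacc
    exact not_disjoint_Omega_of_orbit_lt hap ha (right_mem_Icc.2 hap.le) horb hfree
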